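/- Let (u_n) ⊆ C_c^∞(Ω) be a sequence with sup_n ‖|∇u_n|‖_{L^{p(·)}(Ω)} < ∞ and ‖u_n‖_{L^{p(·)}(Ω)} → 0. Suppose the finite Borel measures ν_n := |u_n(x)|^{q(x)} dx and μ_n := |∇u_n(x)|^{p(x)} dx on Ω converge weakly to finite Borel measures ν and μ respectively (i.e. ∫ f dν_n → ∫ f dν and ∫ f dμ_n → ∫ f dμ for every bounded continuous f : Ω → ℝ). Then for every φ ∈ C_c^∞(Ω) the reverse Hölder inequality holds: S(p(·),q(·),Ω)·‖φ‖_{L^{q(·)}_ν(Ω)} ≤ ‖φ‖_{L^{p(·)}_μ(Ω)}. -/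

import Mathlib

open MeasureTheory Metric Set Filter Topology

noncomputable section

abbrev EN (N : ℕ) : Type := EuclideanSpace ℝ (Fin N)

/-- Luxemburg norm of `u` on `U` w.r.t. the measure `m` and variable exponent `r`. -/
noncomputable def luxNormM {N : ℕ} (m : Measure (EN N)) (U : Set (EN N))
    (r u : EN N → ℝ) : ℝ :=
  sInf {l : ℝ | 0 < l ∧ (∫ x in U, (|u x| / l) ^ (r x) ∂m) ≤ 1}

/-- Luxemburg norm w.r.t. Lebesgue measure. -/
noncomputable def luxNorm {N : ℕ} (U : Set (EN N)) (r u : EN N → ℝ) : ℝ :=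
  luxNormM volume U r u

/-- `v` is a `C_c^∞` test function on `U`. -/
def TestFn {N : ℕ} (U : Set (EN N)) (v : EN N → ℝ) : Prop :=
  ContDiff ℝ (⊤ : ℕ∞) v ∧ HasCompactSupport v ∧ tsupport v ⊆ U

/-- Pointwise length of the gradient of `v`. -/
noncomputable def grad {N : ℕ} (v : EN N → ℝ) (x : EN N) : ℝ := ‖fderiv ℝ v x‖

/-- The variable exponent Sobolev constant `S(p(·),q(·),U)`. -/
noncomputable def sobolevConst {N : ℕ} (p q : EN N → ℝ) (U : Set (EN N)) : ℝ :=
  sInf {c : ℝ | ∃ v : EN N → ℝ, TestFn U v ∧ v ≠ 0 ∧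
    c = luxNorm U p (grad v) / luxNorm U q v}

/-- The critical Sobolev exponent of the value `pval` in dimension `N`. -/
noncomputable def pstar (N : ℕ) (pval : ℝ) : ℝ := N * pval / (N - pval)

/-- `K_r⁻¹`, the best constant in the classical Sobolev inequality. -/
noncomputable def Kinv (N : ℕ) (r : ℝ) : ℝ :=
  sobolevConst (fun _ => r) (fun _ => pstar N r) (univ : Set (EN N))

/-- The localized Sobolev constant `S̄_x`. -/
noncomputable def SbarAt {N : ℕ} (p q : EN N → ℝ) (x : EN N) : ℝ :=
  sSup {s : ℝ | ∃ ε : ℝ, 0 < ε ∧ s = sobolevConst p q (ball x ε)}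

/-- The critical set `A`. -/
def critSet {N : ℕ} (p q : EN N → ℝ) (Ω : Set (EN N)) : Set (EN N) :=
  {x | x ∈ Ω ∧ p x < N ∧ q x = pstar N (p x)}

/-- The critical constant `S̄ = inf_{x ∈ A} S̄_x`. -/
noncomputable def SbarCrit {N : ℕ} (p q : EN N → ℝ) (Ω : Set (EN N)) : ℝ :=
  sInf (SbarAt p q '' critSet p q Ω)

/-- A modulus of continuity `ρ` with `ρ(t) log(1/t) → 0` as `t → 0+`. -/
def Modulus (ρ : ℝ → ℝ) : Prop :=
  Tendsto (fun t => ρ t * Real.log (1 / t)) (nhdsWithin 0 (Set.Ioi 0)) (nhds 0)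

/-- `f` has modulus of continuity `ρ` on `Ω`. -/
def HasModulusOn {N : ℕ} (f : EN N → ℝ) (ρ : ℝ → ℝ) (Ω : Set (EN N)) : Prop :=
  ∀ x ∈ Ω, ∀ y ∈ Ω, |f x - f y| ≤ ρ (dist x y)

/-!
Test the Sobolev inequality with `φ uₙ`. Since `∇(φ uₙ) = φ ∇uₙ + uₙ ∇φ` and `uₙ → 0` in
`L^{p(·)}`, the second term is negligible, so `S ‖φ uₙ‖_{q(·)} ≤ ‖φ ∇uₙ‖_{p(·)} + o(1)`. Both
Luxemburg norms are read off from their modulars `∫ (|φ| |uₙ| / l)^q` and `∫ (|φ| |∇uₙ| / l)^p`,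
which are the integrals of the continuous functions `(|φ| / l)^q` and `(|φ| / l)^p` against
`νₙ` and `μₙ`, hence converge to the modulars of `φ` with respect to `ν` and `μ`. Strict
inequalities between modulars and `1` survive the limit and give `S l₁ ≤ l₂` whenever
`l₁ < ‖φ‖_{L^{q(·)}_ν}` and `l₂ > ‖φ‖_{L^{p(·)}_μ}`.
-/

section LuxemburgNorm

variable {N : ℕ} {m : Measure (EN N)} {U : Set (EN N)} {r t u v : EN N → ℝ}

def luxModular (m : Measure (EN N)) (U : Set (EN N)) (r u : EN N → ℝ) (l : ℝ) : ℝ :=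
  ∫ x in U, (|u x| / l) ^ r x ∂m

def LuxIntegrable (m : Measure (EN N)) (U : Set (EN N)) (r u : EN N → ℝ) : Prop :=
  ∀ l, 0 < l → IntegrableOn (fun x => (|u x| / l) ^ r x) U m

lemma luxNormM_nonneg : 0 ≤ luxNormM m U r u :=
  Real.sInf_nonneg fun _ hl => hl.1.le

lemma luxNormM_le_of_luxModular_le_one {l : ℝ} (hl : 0 < l)
    (h : luxModular m U r u l ≤ 1) : luxNormM m U r u ≤ l :=
  csInf_le ⟨0, fun _ hx => hx.1.le⟩ ⟨hl, h⟩

lemma one_lt_luxModular_of_lt_luxNormM {l : ℝ} (hl : 0 < l) (h : l < luxNormM m U r u) :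
    1 < luxModular m U r u l :=
  lt_of_not_ge fun h' => (luxNormM_le_of_luxModular_le_one hl h').not_gt h

lemma luxNormM_zero (hr : ∀ x ∈ U, r x ≠ 0) : luxNormM m U r 0 = 0 := by
  refine le_antisymm (le_of_forall_gt_imp_ge_of_dense fun l hl =>
    luxNormM_le_of_luxModular_le_one hl ?_) luxNormM_nonneg
  rw [luxModular, setIntegral_eq_zero_of_forall_eq_zero fun x hx => ?_]
  · exact zero_le_one
  · simp [Real.zero_rpow (hr x hx)]

lemma luxIntegrable_of_abs_le (hU : MeasurableSet U) (hmU : m U ≠ ⊤) (hr : Measurable r)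
    {C K : ℝ} (hrb : ∀ x ∈ U, 0 ≤ r x ∧ r x ≤ C) (hu : Measurable u)
    (hK : ∀ x, |u x| ≤ K) :
    LuxIntegrable m U r u := by
  intro l hl
  refine Integrable.mono' (g := fun _ => max 1 ((K / l) ^ C)) (integrableOn_const hmU)
    ((hu.abs.div_const l).pow hr).aestronglyMeasurable
    ((ae_restrict_iff' hU).2 (ae_of_all _ fun x hx => ?_))
  obtain ⟨hr0, hrC⟩ := hrb x hx
  have hb0 : 0 ≤ |u x| / l := by positivity
  rw [Real.norm_of_nonneg (Real.rpow_nonneg hb0 _)]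
  rcases le_or_gt (|u x| / l) 1 with hb1 | hb1
  · exact (Real.rpow_le_one hb0 hb1 hr0).trans (le_max_left _ _)
  · calc (|u x| / l) ^ r x ≤ (|u x| / l) ^ C := Real.rpow_le_rpow_of_exponent_le hb1.le hrC
      _ ≤ (K / l) ^ C := Real.rpow_le_rpow hb0 (by gcongr; exact hK x) (hr0.trans hrC)
      _ ≤ _ := le_max_right _ _

lemma HasCompactSupport.luxIntegrable (hus : HasCompactSupport u) (hu : Continuous u)
    (hU : MeasurableSet U) (hmU : m U ≠ ⊤) (hr : Measurable r) {C : ℝ}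
    (hrb : ∀ x ∈ U, 0 ≤ r x ∧ r x ≤ C) : LuxIntegrable m U r u := by
  obtain ⟨K, hK⟩ := hu.bounded_above_of_compact_support hus
  exact luxIntegrable_of_abs_le hU hmU hr hrb hu.measurable fun x => (Real.norm_eq_abs _) ▸ hK x

section ExponentAtLeastOne

variable (hU : MeasurableSet U) (hr : ∀ x ∈ U, 1 ≤ r x)
include hU hr

lemma luxModular_le_div_mul {l l' : ℝ} (hl' : 0 < l') (hll' : l' ≤ l)
    (hint : IntegrableOn (fun x => (|u x| / l') ^ r x) U m) :
    luxModular m U r u l ≤ l' / l * luxModular m U r u l' := by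
  have hl : 0 < l := hl'.trans_le hll'
  rw [luxModular, luxModular, ← integral_const_mul]
  refine integral_mono_of_nonneg (ae_of_all _ fun x => by positivity) (hint.const_mul _)
    ((ae_restrict_iff' hU).2 (ae_of_all _ fun x hx => ?_))
  calc (|u x| / l) ^ r x = (l' / l) ^ r x * (|u x| / l') ^ r x := by
        rw [← Real.mul_rpow (by positivity) (by positivity)]
        field_simp
    _ ≤ l' / l * (|u x| / l') ^ r x := by
        gcongr
        exact Real.rpow_le_self_of_le_one (by positivity) (div_le_one_of_le₀ hll' hl.le) (hr x hx)

lemma exists_luxModular_le_one (hu : LuxIntegrable m U r u) :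
    ∃ l, 0 < l ∧ luxModular m U r u l ≤ 1 := by
  set L := max 1 (luxModular m U r u 1)
  have hL : 0 < L := lt_max_of_lt_left one_pos
  refine ⟨L, hL, ?_⟩
  calc luxModular m U r u L ≤ 1 / L * luxModular m U r u 1 :=
        luxModular_le_div_mul hU hr one_pos (le_max_left _ _) (hu 1 one_pos)
    _ ≤ 1 := by
        rw [one_div_mul_eq_div, div_le_one hL]
        exact le_max_right _ _

lemma luxModular_lt_one_of_luxNormM_lt (hu : LuxIntegrable m U r u) {l : ℝ}
    (h : luxNormM m U r u < l) : luxModular m U r u l < 1 := by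
  obtain ⟨l', ⟨hl'0, hl'1⟩, hl'l⟩ :=
    exists_lt_of_csInf_lt (exists_luxModular_le_one hU hr hu) h
  calc luxModular m U r u l ≤ l' / l * luxModular m U r u l' :=
        luxModular_le_div_mul hU hr hl'0 hl'l.le (hu l' hl'0)
    _ ≤ l' / l := mul_le_of_le_one_right (div_nonneg hl'0.le (hl'0.trans hl'l).le) hl'1
    _ < 1 := (div_lt_one (hl'0.trans hl'l)).2 hl'l

lemma le_luxNormM_of_one_lt_luxModular (hu : LuxIntegrable m U r u) {l : ℝ}
    (h : 1 < luxModular m U r u l) : l ≤ luxNormM m U r u :=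
  le_of_not_gt fun h' => (luxModular_lt_one_of_luxNormM_lt hU hr hu h').not_gt h

lemma luxModular_le_of_abs_le_add_mul (hu : LuxIntegrable m U r u)
    (hv : LuxIntegrable m U r v) {a b l₁ l₂ : ℝ} (ha : 0 < a) (hb : 0 < b) (hl₁ : 0 < l₁)
    (hl₂ : 0 < l₂) (h : ∀ x ∈ U, |t x| ≤ a * |u x| + b * |v x|) :
    luxModular m U r t (a * l₁ + b * l₂) ≤
      a * l₁ / (a * l₁ + b * l₂) * luxModular m U r u l₁
        + b * l₂ / (a * l₁ + b * l₂) * luxModular m U r v l₂ := by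
  have hL : 0 < a * l₁ + b * l₂ := by positivity
  have hint := ((hu l₁ hl₁).const_mul (a * l₁ / (a * l₁ + b * l₂))).add
    ((hv l₂ hl₂).const_mul (b * l₂ / (a * l₁ + b * l₂)))
  rw [luxModular, luxModular, luxModular, ← integral_const_mul, ← integral_const_mul,
    ← integral_add ((hu l₁ hl₁).const_mul _) ((hv l₂ hl₂).const_mul _)]
  refine integral_mono_of_nonneg (ae_of_all _ fun x => by positivity) hint
    ((ae_restrict_iff' hU).2 (ae_of_all _ fun x hx => ?_))
  have hbase : |t x| / (a * l₁ + b * l₂) ≤ a * l₁ / (a * l₁ + b * l₂) * (|u x| / l₁)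
      + b * l₂ / (a * l₁ + b * l₂) * (|v x| / l₂) := by
    calc |t x| / (a * l₁ + b * l₂) ≤ (a * |u x| + b * |v x|) / (a * l₁ + b * l₂) := by
          gcongr; exact h x hx
      _ = _ := by field_simp
  calc (|t x| / (a * l₁ + b * l₂)) ^ r x ≤ (a * l₁ / (a * l₁ + b * l₂) * (|u x| / l₁)
        + b * l₂ / (a * l₁ + b * l₂) * (|v x| / l₂)) ^ r x := by
        gcongr
        linarith [hr x hx]
    _ ≤ _ := by
        simpa only [smul_eq_mul] using (convexOn_rpow (hr x hx)).2
          (mem_Ici.2 (by positivity)) (mem_Ici.2 (by positivity)) (by positivity)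
          (by positivity) (by field_simp)

lemma luxNormM_le_add_mul_of_abs_le (hu : LuxIntegrable m U r u)
    (hv : LuxIntegrable m U r v) {a b : ℝ} (ha : 0 < a) (hb : 0 < b)
    (h : ∀ x ∈ U, |t x| ≤ a * |u x| + b * |v x|) :
    luxNormM m U r t ≤ a * luxNormM m U r u + b * luxNormM m U r v := by
  have hle : ∀ l₁ l₂, luxNormM m U r u < l₁ → luxNormM m U r v < l₂ →
      luxNormM m U r t ≤ a * l₁ + b * l₂ := by
    intro l₁ l₂ h₁ h₂
    have hl₁ : 0 < l₁ := luxNormM_nonneg.trans_lt h₁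
    have hl₂ : 0 < l₂ := luxNormM_nonneg.trans_lt h₂
    refine luxNormM_le_of_luxModular_le_one (by positivity) ?_
    calc luxModular m U r t (a * l₁ + b * l₂)
        ≤ a * l₁ / (a * l₁ + b * l₂) * luxModular m U r u l₁
          + b * l₂ / (a * l₁ + b * l₂) * luxModular m U r v l₂ :=
          luxModular_le_of_abs_le_add_mul hU hr hu hv ha hb hl₁ hl₂ h
      _ ≤ a * l₁ / (a * l₁ + b * l₂) * 1 + b * l₂ / (a * l₁ + b * l₂) * 1 := by
          gcongr
          exacts [(luxModular_lt_one_of_luxNormM_lt hU hr hu h₁).le,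
            (luxModular_lt_one_of_luxNormM_lt hU hr hv h₂).le]
      _ = 1 := by field_simp
  refine le_of_forall_pos_lt_add fun ε hε => ?_
  calc luxNormM m U r t
      ≤ a * (luxNormM m U r u + ε / (4 * a)) + b * (luxNormM m U r v + ε / (4 * b)) :=
        hle _ _ (by linarith [div_pos hε (mul_pos four_pos ha)])
          (by linarith [div_pos hε (mul_pos four_pos hb)])
    _ = a * luxNormM m U r u + b * luxNormM m U r v + ε / 2 := by field_simp; ring
    _ < _ := by linarith

end ExponentAtLeastOne

end LuxemburgNorm

section TestFunctions

variable {N : ℕ} {U : Set (EN N)} {φ v : EN N → ℝ}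

lemma grad_nonneg (v : EN N → ℝ) (x : EN N) : 0 ≤ grad v x := norm_nonneg _

lemma grad_mul_le {x : EN N} (hφ : DifferentiableAt ℝ φ x) (hv : DifferentiableAt ℝ v x) :
    grad (fun y => φ y * v y) x ≤ |φ x| * grad v x + |v x| * grad φ x := by
  rw [grad, fderiv_fun_mul hφ hv]
  refine (norm_add_le _ _).trans_eq ?_
  rw [norm_smul, norm_smul, Real.norm_eq_abs, Real.norm_eq_abs, grad, grad]

lemma TestFn.mul (hφ : TestFn U φ) (hv : ContDiff ℝ (⊤ : ℕ∞) v) :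
    TestFn U (fun x => φ x * v x) :=
  ⟨hφ.1.mul hv, hφ.2.1.mul_right, tsupport_mul_subset_left.trans hφ.2.2⟩

lemma TestFn.continuous_grad (hv : TestFn U v) : Continuous (grad v) :=
  (hv.1.continuous_fderiv (by norm_num)).norm

lemma TestFn.hasCompactSupport_grad (hv : TestFn U v) : HasCompactSupport (grad v) :=
  (hv.2.1.fderiv ℝ).norm

lemma TestFn.exists_grad_le (hv : TestFn U v) : ∃ G, 0 < G ∧ ∀ x, grad v x ≤ G := by
  obtain ⟨G, hG⟩ :=
    hv.continuous_grad.bounded_above_of_compact_support hv.hasCompactSupport_grad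
  exact ⟨max G 1, by positivity, fun x =>
    ((Real.norm_of_nonneg (grad_nonneg v x)) ▸ hG x).trans (le_max_left _ _)⟩

lemma sobolevConst_nonneg (p q : EN N → ℝ) (U : Set (EN N)) : 0 ≤ sobolevConst p q U :=
  Real.sInf_nonneg fun _ ⟨_, _, _, hs⟩ => hs ▸ div_nonneg luxNormM_nonneg luxNormM_nonneg

lemma sobolevConst_mul_luxNorm_le {p q : EN N → ℝ} (hq : ∀ x ∈ U, q x ≠ 0)
    (hv : TestFn U v) :
    sobolevConst p q U * luxNorm U q v ≤ luxNorm U p (grad v) := by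
  rcases (show 0 ≤ luxNorm U q v from luxNormM_nonneg).eq_or_lt with hv0 | hvpos
  · rw [← hv0, mul_zero]
    exact luxNormM_nonneg
  have hne : v ≠ 0 := by
    rintro rfl
    exact hvpos.ne' (luxNormM_zero hq)
  have hS : sobolevConst p q U ≤ luxNorm U p (grad v) / luxNorm U q v :=
    csInf_le ⟨0, fun _ ⟨_, _, _, hs⟩ => hs ▸ div_nonneg luxNormM_nonneg luxNormM_nonneg⟩
      ⟨v, hv, hne, rfl⟩
  simpa only [div_mul_cancel₀ _ hvpos.ne'] using mul_le_mul_of_nonneg_right hS hvpos.le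

end TestFunctions

lemma tendsto_luxModular_mul_of_weak {N : ℕ} {m₀ m : Measure (EN N)} {U : Set (EN N)}
    (hU : MeasurableSet U) {r φ : EN N → ℝ} (hr : Continuous r) (hr1 : ∀ x ∈ U, 1 ≤ r x)
    (hφ : Continuous φ) (hφs : HasCompactSupport φ) (hφU : tsupport φ ⊆ U)
    {w : ℕ → EN N → ℝ}
    (hw : ∀ f : EN N → ℝ, Continuous f → (∃ B, ∀ x, |f x| ≤ B) →
      Tendsto (fun n => ∫ x in U, f x * |w n x| ^ r x ∂m₀) atTop (𝓝 (∫ x, f x ∂m)))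
    {l : ℝ} (hl : 0 ≤ l) :
    Tendsto (fun n => luxModular m₀ U r (fun x => φ x * w n x) l) atTop
      (𝓝 (luxModular m U r φ l)) := by
  -- Off `U` the exponent may vanish; raising it to at least `1` there makes the
  -- test function continuous at the zeros of `φ` without changing it on `U`.
  set f : EN N → ℝ := fun x => (|φ x| / l) ^ max (r x) 1
  have hfU : ∀ x ∈ U, f x = (|φ x| / l) ^ r x := fun x hx => by
    simp only [f, max_eq_left (hr1 x hx)]
  have hf0 : ∀ x, φ x = 0 → f x = 0 := fun x hx => by
    simp [f, hx, Real.zero_rpow (lt_max_of_lt_right one_pos).ne']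
  have hfc : Continuous f :=
    (hφ.abs.div_const l).rpow (hr.max continuous_const) fun _ =>
      Or.inr (lt_max_of_lt_right one_pos)
  have hfs : HasCompactSupport f := hφs.mono'
    ((Function.support_subset_iff'.2 fun x hx => hf0 x (Function.notMem_support.1 hx)).trans
      (subset_tsupport φ))
  obtain ⟨B, hB⟩ := hfc.bounded_above_of_compact_support hfs
  have hlim : ∫ x, f x ∂m = luxModular m U r φ l := by
    rw [← setIntegral_eq_integral_of_forall_compl_eq_zero fun x hx =>
      hf0 x (image_eq_zero_of_notMem_tsupport fun h => hx (hφU h))]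
    exact setIntegral_congr_fun hU hfU
  refine hlim ▸ (hw f hfc ⟨B, fun x => Real.norm_eq_abs (f x) ▸ hB x⟩).congr fun n =>
    setIntegral_congr_fun hU fun x hx => ?_
  rw [hfU x hx, abs_mul, mul_div_right_comm, Real.mul_rpow (by positivity) (abs_nonneg _)]

lemma sobolevConst_mul_le_of_luxModular {N : ℕ} {U : Set (EN N)} (hU : MeasurableSet U)
    (hmU : volume U ≠ ⊤) {p q : EN N → ℝ} (hp : Continuous p) (hq : Continuous q) {C : ℝ}
    (hpb : ∀ x ∈ U, 1 ≤ p x ∧ p x ≤ C) (hqb : ∀ x ∈ U, 1 ≤ q x ∧ q x ≤ C)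
    {φ v : EN N → ℝ} (hφ : TestFn U φ) (hv : TestFn U v) {G : ℝ} (hG : 0 < G)
    (hGφ : ∀ x, grad φ x ≤ G) {l₁ l₂ : ℝ}
    (h₁ : 1 < luxModular volume U q (fun x => φ x * v x) l₁) (hl₂ : 0 < l₂)
    (h₂ : luxModular volume U p (fun x => φ x * grad v x) l₂ ≤ 1) :
    sobolevConst p q U * l₁ ≤ l₂ + G * luxNorm U p v := by
  have hp0 : ∀ x ∈ U, 0 ≤ p x ∧ p x ≤ C := fun x hx =>
    ⟨zero_le_one.trans (hpb x hx).1, (hpb x hx).2⟩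
  have hq0 : ∀ x ∈ U, 0 ≤ q x ∧ q x ≤ C := fun x hx =>
    ⟨zero_le_one.trans (hqb x hx).1, (hqb x hx).2⟩
  have hφv : TestFn U (fun x => φ x * v x) := hφ.mul hv.1
  have hφgrad : LuxIntegrable volume U p (fun x => φ x * grad v x) :=
    hv.hasCompactSupport_grad.mul_left.luxIntegrable (hφ.1.continuous.mul hv.continuous_grad)
      hU hmU hp.measurable hp0
  have hgrad : ∀ x ∈ U,
      |grad (fun y => φ y * v y) x| ≤ 1 * |φ x * grad v x| + G * |v x| := by
    intro x _
    rw [abs_of_nonneg (grad_nonneg _ _), one_mul, abs_mul, abs_of_nonneg (grad_nonneg v x)]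
    calc grad (fun y => φ y * v y) x ≤ |φ x| * grad v x + |v x| * grad φ x :=
          grad_mul_le (hφ.1.differentiable (by norm_num)).differentiableAt
            (hv.1.differentiable (by norm_num)).differentiableAt
      _ ≤ |φ x| * grad v x + G * |v x| := by nlinarith [abs_nonneg (v x), hGφ x]
  calc sobolevConst p q U * l₁ ≤ sobolevConst p q U * luxNorm U q (fun x => φ x * v x) :=
        mul_le_mul_of_nonneg_left (le_luxNormM_of_one_lt_luxModular hU (fun x hx => (hqb x hx).1)
          (hφv.2.1.luxIntegrable hφv.1.continuous hU hmU hq.measurable hq0) h₁)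
          (sobolevConst_nonneg p q U)
    _ ≤ luxNorm U p (grad fun x => φ x * v x) :=
        sobolevConst_mul_luxNorm_le (fun x hx => (one_pos.trans_le (hqb x hx).1).ne') hφv
    _ ≤ 1 * luxNorm U p (fun x => φ x * grad v x) + G * luxNorm U p v :=
        luxNormM_le_add_mul_of_abs_le hU (fun x hx => (hpb x hx).1) hφgrad
          (hv.2.1.luxIntegrable hv.1.continuous hU hmU hp.measurable hp0) one_pos hG hgrad
    _ ≤ l₂ + G * luxNorm U p v := by
        rw [one_mul]
        gcongr
        exact luxNormM_le_of_luxModular_le_one hl₂ h₂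

lemma mul_le_of_forall_lt_lt {S A B : ℝ} (hS : 0 ≤ S) (hB : 0 ≤ B)
    (h : ∀ l₁, 0 < l₁ → l₁ < A → ∀ l₂, B < l₂ → S * l₁ ≤ l₂) : S * A ≤ B := by
  have hlt : ∀ l₁ ∈ Iio A, S * l₁ ≤ B := fun l₁ hl₁ => by
    rcases le_or_gt l₁ 0 with h0 | h0
    · exact (mul_nonpos_of_nonneg_of_nonpos hS h0).trans hB
    · exact le_of_forall_gt_imp_ge_of_dense (h l₁ h0 hl₁)
  exact le_of_tendsto (((continuous_const_mul S).tendsto A).mono_left nhdsWithin_le_nhds)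
    (eventually_nhdsWithin_of_forall hlt)

theorem stmt18_general {N : ℕ} (Ω : Set (EN N)) (hΩo : IsOpen Ω)
    (hΩb : Bornology.IsBounded Ω)
    (p q : EN N → ℝ) (hpc : Continuous p) (hqc : Continuous q)
    (c C : ℝ) (hc : 1 < c)
    (hpb : ∀ x ∈ Ω, c ≤ p x ∧ p x ≤ C)
    (hqb : ∀ x ∈ Ω, c ≤ q x ∧ q x ≤ C)
    (u : ℕ → EN N → ℝ) (hu : ∀ n, TestFn Ω (u n))
    (h0 : Tendsto (fun n => luxNorm Ω p (u n)) atTop (nhds 0))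
    (ν μ : Measure (EN N)) (hμ : IsFiniteMeasure μ)
    (hνw : ∀ f : EN N → ℝ, Continuous f → (∃ B, ∀ x, |f x| ≤ B) →
      Tendsto (fun n => ∫ x in Ω, f x * |u n x| ^ q x) atTop (nhds (∫ x, f x ∂ν)))
    (hμw : ∀ f : EN N → ℝ, Continuous f → (∃ B, ∀ x, |f x| ≤ B) →
      Tendsto (fun n => ∫ x in Ω, f x * grad (u n) x ^ p x) atTop (nhds (∫ x, f x ∂μ))) :
    ∀ φ : EN N → ℝ, TestFn Ω φ →
      sobolevConst p q Ω * luxNormM ν Ω q φ ≤ luxNormM μ Ω p φ := by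
  intro φ hφ
  have hΩ := hΩo.measurableSet
  have hp : ∀ x ∈ Ω, 1 ≤ p x ∧ p x ≤ C := fun x hx =>
    ⟨hc.le.trans (hpb x hx).1, (hpb x hx).2⟩
  have hq : ∀ x ∈ Ω, 1 ≤ q x ∧ q x ≤ C := fun x hx =>
    ⟨hc.le.trans (hqb x hx).1, (hqb x hx).2⟩
  obtain ⟨G, hG, hGφ⟩ := hφ.exists_grad_le
  refine mul_le_of_forall_lt_lt (sobolevConst_nonneg p q Ω) luxNormM_nonneg
    fun l₁ hl₁ hl₁A l₂ hl₂B => ?_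
  have hl₂ : 0 < l₂ := luxNormM_nonneg.trans_lt hl₂B
  have hφμ : luxModular μ Ω p φ l₂ < 1 :=
    luxModular_lt_one_of_luxNormM_lt hΩ (fun x hx => (hp x hx).1)
      (hφ.2.1.luxIntegrable hφ.1.continuous hΩ (measure_ne_top μ Ω) hpc.measurable
        fun x hx => ⟨zero_le_one.trans (hp x hx).1, (hp x hx).2⟩) hl₂B
  have hν' := tendsto_luxModular_mul_of_weak hΩ hqc (fun x hx => (hq x hx).1) hφ.1.continuous
    hφ.2.1 hφ.2.2 hνw hl₁.le
  have hμ' := tendsto_luxModular_mul_of_weak hΩ hpc (fun x hx => (hp x hx).1) hφ.1.continuous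
    hφ.2.1 hφ.2.2 (w := fun n => grad (u n))
    (by simpa only [abs_of_nonneg (grad_nonneg _ _)] using hμw) hl₂.le
  have hlim : Tendsto (fun n => l₂ + G * luxNorm Ω p (u n)) atTop (𝓝 l₂) := by
    simpa using tendsto_const_nhds.add (h0.const_mul G)
  refine ge_of_tendsto hlim ?_
  filter_upwards [hν'.eventually (lt_mem_nhds (one_lt_luxModular_of_lt_luxNormM hl₁ hl₁A)),
    hμ'.eventually (gt_mem_nhds hφμ)] with n hn₁ hn₂
  exact sobolevConst_mul_le_of_luxModular hΩ hΩb.measure_lt_top.ne hpc hqc hp hq hφ (hu n)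
    hG hGφ hn₁ hl₂ hn₂.le

/-- the reverse Hölder inequality for the weak limit measures of
`|u_n|^{q(x)} dx` and `|∇u_n|^{p(x)} dx` when `u_n → 0` in `L^{p(·)}`. -/
theorem stmt18 {N : ℕ} (hN : 2 ≤ N) (Ω : Set (EN N)) (hΩo : IsOpen Ω)
    (hΩne : Ω.Nonempty) (hΩb : Bornology.IsBounded Ω)
    (p q : EN N → ℝ) (hpc : Continuous p) (hqc : Continuous q)
    (c C : ℝ) (hc : 1 < c)
    (hpb : ∀ x ∈ Ω, c ≤ p x ∧ p x ≤ C)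
    (hqb : ∀ x ∈ Ω, c ≤ q x ∧ q x ≤ C)
    (u : ℕ → EN N → ℝ) (hu : ∀ n, TestFn Ω (u n))
    (M : ℝ) (hM : ∀ n, luxNorm Ω p (grad (u n)) ≤ M)
    (h0 : Tendsto (fun n => luxNorm Ω p (u n)) atTop (nhds 0))
    (ν μ : Measure (EN N)) (hν : IsFiniteMeasure ν) (hμ : IsFiniteMeasure μ)
    (hνw : ∀ f : EN N → ℝ, Continuous f → (∃ B, ∀ x, |f x| ≤ B) →
      Tendsto (fun n => ∫ x in Ω, f x * |u n x| ^ q x) atTop (nhds (∫ x, f x ∂ν)))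
    (hμw : ∀ f : EN N → ℝ, Continuous f → (∃ B, ∀ x, |f x| ≤ B) →
      Tendsto (fun n => ∫ x in Ω, f x * grad (u n) x ^ p x) atTop (nhds (∫ x, f x ∂μ))) :
    ∀ φ : EN N → ℝ, TestFn Ω φ →
      sobolevConst p q Ω * luxNormM ν Ω q φ ≤ luxNormM μ Ω p φ :=
  stmt18_general Ω hΩo hΩb p q hpc hqc c C hc hpb hqb u hu h0 ν μ hμ hνw hμw
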